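/- Let R be a finite nonzero commutative ring with identity, let 2 ≤ k < n, let f_i : R^{2i-2} → R for 2 ≤ i ≤ n be arbitrary functions, and let A ⊆ R. Then the characteristic polynomial of the (real) adjacency matrix of BΓ_k[A] divides the characteristic polynomial of the (real) adjacency matrix of BΓ_n[A]; equivalently, the multiset of eigenvalues (with multiplicities) of the adjacency matrix of BΓ_k[A] is contained in the multiset of eigenvalues of the adjacency matrix of BΓ_n[A]. -/

import Mathlib

attribute [local instance] Classical.propDecidable

/-- The adjacency condition of the graph `BΓ(R; f₂, …, f_n)`. -/
def bAdj {R : Type} [CommRing R] (n : ℕ)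
    (f : (i : ℕ) → (Fin i → R) → (Fin i → R) → R)
    (p l : Fin n → R) : Prop :=
  ∀ i : Fin n, 1 ≤ (i : ℕ) →
    p i + l i = f i (fun j => p (Fin.castLE i.isLt.le j))
                    (fun j => l (Fin.castLE i.isLt.le j))

/-- The bipartite graph `BΓ(R; f₂, …, f_n)`. -/
def BGamma (R : Type) [CommRing R] (n : ℕ)
    (f : (i : ℕ) → (Fin i → R) → (Fin i → R) → R) :
    SimpleGraph ((Fin n → R) ⊕ (Fin n → R)) :=
  SimpleGraph.fromRel (fun x y => ∃ p l, x = Sum.inl p ∧ y = Sum.inr l ∧ bAdj n f p l)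

/-- The set of vertices (points and lines) whose first coordinate lies in `A`;
`BΓ_n[A]` is the subgraph induced on this set. -/
def firstIn (R : Type) [CommRing R] (A : Set R) (n : ℕ) (hn : 0 < n) :
    Set ((Fin n → R) ⊕ (Fin n → R)) :=
  {v | Sum.elim (fun p : Fin n → R => p ⟨0, hn⟩) (fun l : Fin n → R => l ⟨0, hn⟩) v ∈ A}

/-!
Truncating points and lines to their first `k` coordinates is a covering map `BΓ_n[A] → BΓ_k[A]`:
the adjacency equations determine the coordinates `l_i`, `i ≥ 2`, of a line adjacent to a point
recursively from the earlier ones, so the neighbours of a vertex correspond bijectively to the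
neighbours of its truncation. Pulling functions back along a surjective covering map is an
injective linear map that intertwines the two adjacency operators, so the adjacency operator of
`BΓ_k[A]` is the restriction of that of `BΓ_n[A]` to an invariant subspace, and the
characteristic polynomial of such a restriction divides the full one.
-/

open Module

theorem Module.Basis.sumExtend_apply_inl {K V ι : Type*} [Field K] [AddCommGroup V] [Module K V]
    {v : ι → V} (hv : LinearIndependent K v) (i : ι) :
    Basis.sumExtend hv (Sum.inl i) = v i := by
  simp [Basis.sumExtend, Equiv.Set.sumDiffSubset, Equiv.Set.union]
  rfl

namespace LinearMap

variable {K V W ι : Type*} [Field K] [AddCommGroup V] [Module K V] [FiniteDimensional K V]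

/-- Extending `v` to a basis makes the matrix of `f` block upper triangular with diagonal
block `B`. -/
theorem charpoly_dvd_of_linearIndependent [Fintype ι] [DecidableEq ι] (f : End K V) {v : ι → V}
    (hv : LinearIndependent K v) (B : Matrix ι ι K) (hf : ∀ j, f (v j) = ∑ i, B i j • v i) :
    B.charpoly ∣ f.charpoly := by
  let b := Basis.sumExtend hv
  have : Fintype (Basis.sumExtendIndex hv) :=
    have := Module.Finite.finite_basis b
    have : Finite (Basis.sumExtendIndex hv) := .of_injective _ (Sum.inr_injective (α := ι))
    Fintype.ofFinite _
  have hblock : toMatrix b b f = Matrix.fromBlocks B ((toMatrix b b f).toBlocks₁₂) 0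
      ((toMatrix b b f).toBlocks₂₂) := by
    have hcol (j : ι) (x) : b.repr (f (b (.inl j))) x = Sum.elim (B · j) 0 x := by
      have hb (i : ι) : b (.inl i) = v i := Basis.sumExtend_apply_inl hv i
      simp_rw [hb, hf, ← hb, map_sum, map_smul, Basis.repr_self]
      rcases x with i | x <;> simp [Finsupp.single_apply]
    ext (i | x) (j | y) <;> simp [toMatrix_apply, Matrix.toBlocks₁₂, Matrix.toBlocks₂₂, hcol]
  rw [← charpoly_toMatrix f b, hblock, Matrix.charpoly_fromBlocks_zero₂₁]
  exact dvd_mul_right _ _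

theorem charpoly_dvd_of_comp_eq_comp [AddCommGroup W] [Module K W] [FiniteDimensional K W]
    (f : End K V) (g : End K W) {T : W →ₗ[K] V} (hT : Function.Injective T)
    (h : f ∘ₗ T = T ∘ₗ g) : g.charpoly ∣ f.charpoly := by
  let b := Free.chooseBasis K W
  rw [← charpoly_toMatrix g b]
  refine charpoly_dvd_of_linearIndependent f (b.linearIndependent.map' T (ker_eq_bot.mpr hT)) _
    fun j => ?_
  simp only [Function.comp_apply, toMatrix_apply, ← map_smul, ← map_sum, b.sum_repr]
  exact LinearMap.congr_fun h (b j)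

end LinearMap

namespace SimpleGraph

variable {V W : Type*}

/-- Covering maps of graphs, without the surjectivity requirement. -/
def IsLocallyBijective (G : SimpleGraph V) (H : SimpleGraph W) (φ : V → W) : Prop :=
  ∀ v, Set.BijOn φ (G.neighborSet v) (H.neighborSet (φ v))

theorem IsLocallyBijective.induce {G : SimpleGraph V} {H : SimpleGraph W} {φ : V → W}
    (hφ : IsLocallyBijective G H φ) {s : Set V} {t : Set W} (hst : ∀ v, v ∈ s ↔ φ v ∈ t) :
    IsLocallyBijective (G.induce s) (H.induce t)
      (Set.MapsTo.restrict φ s t fun v => (hst v).mp) := by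
  intro v
  refine ⟨fun w hw => (hφ v).mapsTo hw, fun w₁ hw₁ w₂ hw₂ h => ?_, fun u hu => ?_⟩
  · exact Subtype.ext ((hφ v).injOn hw₁ hw₂ (congrArg Subtype.val h))
  · obtain ⟨w, hw, hwu⟩ := (hφ v).surjOn hu
    exact ⟨⟨w, (hst w).mpr (hwu ▸ u.2)⟩, hw, Subtype.ext hwu⟩

theorem IsLocallyBijective.charpoly_adjMatrix_dvd {K : Type*} [Field K] [Fintype V] [Fintype W]
    [DecidableEq V] [DecidableEq W]
    {G : SimpleGraph V} {H : SimpleGraph W} [DecidableRel G.Adj] [DecidableRel H.Adj] {φ : V → W}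
    (hφ : IsLocallyBijective G H φ) (hsurj : Function.Surjective φ) :
    (H.adjMatrix K).charpoly ∣ (G.adjMatrix K).charpoly := by
  rw [← Matrix.charpoly_mulVecLin, ← Matrix.charpoly_mulVecLin]
  refine LinearMap.charpoly_dvd_of_comp_eq_comp _ _
    (LinearMap.funLeft_injective_of_surjective _ _ φ hsurj)
    (LinearMap.ext fun x => funext fun v => ?_)
  simp only [LinearMap.comp_apply, Matrix.mulVecLin_apply, LinearMap.funLeft_apply,
    adjMatrix_mulVec_apply]
  have hv := hφ v
  simp only [← coe_neighborFinset] at hv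
  exact Finset.sum_nbij φ (fun _ hw => hv.mapsTo hw) hv.injOn hv.surjOn fun _ _ => rfl

end SimpleGraph

def truncate (R : Type) {n k : ℕ} (hkn : k ≤ n) :
    (Fin n → R) ⊕ (Fin n → R) → (Fin k → R) ⊕ (Fin k → R) :=
  Sum.map (· ∘ Fin.castLE hkn) (· ∘ Fin.castLE hkn)

section BGamma

variable {R : Type} [CommRing R] (f : (i : ℕ) → (Fin i → R) → (Fin i → R) → R) {n k : ℕ}

theorem bAdj_swap {p l : Fin n → R} :
    bAdj n (fun i => Function.swap (f i)) l p ↔ bAdj n f p l := by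
  simp only [bAdj, Function.swap, add_comm (l _)]

theorem bAdj.comp_castLE (hkn : k ≤ n) {p l : Fin n → R} (h : bAdj n f p l) :
    bAdj k f (p ∘ Fin.castLE hkn) (l ∘ Fin.castLE hkn) :=
  fun i hi => h (Fin.castLE hkn i) hi

theorem bAdj.eq_of_apply_zero {p l₁ l₂ : Fin n → R} (h₁ : bAdj n f p l₁)
    (h₂ : bAdj n f p l₂) (hn : 0 < n) (h₀ : l₁ ⟨0, hn⟩ = l₂ ⟨0, hn⟩) : l₁ = l₂ := by
  funext ⟨i, hi⟩
  induction i using Nat.strong_induction_on with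
  | _ i ih =>
    rcases Nat.eq_zero_or_pos i with rfl | hpos
    · exact h₀
    · have hprefix : (fun j : Fin i => l₁ (Fin.castLE hi.le j)) =
          fun j => l₂ (Fin.castLE hi.le j) := funext fun j => ih j j.isLt _
      exact add_left_cancel <| (h₁ ⟨i, hi⟩ hpos).trans <| hprefix ▸ (h₂ ⟨i, hi⟩ hpos).symm

def extendLine (p : Fin n → R) (l : Fin k → R) (i : Fin n) : R :=
  if h : (i : ℕ) < k then l ⟨i, h⟩
  else f i (fun j => p (Fin.castLE i.isLt.le j))
      (fun j => extendLine p l (Fin.castLE i.isLt.le j)) - p i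
termination_by (i : ℕ)
decreasing_by exact j.isLt

theorem extendLine_of_lt (p : Fin n → R) (l : Fin k → R) {i : Fin n} (hi : (i : ℕ) < k) :
    extendLine f p l i = l ⟨i, hi⟩ := by
  rw [extendLine, dif_pos hi]

theorem extendLine_comp_castLE (hkn : k ≤ n) (p : Fin n → R) (l : Fin k → R) :
    extendLine f p l ∘ Fin.castLE hkn = l :=
  funext fun j => extendLine_of_lt f p l j.isLt

theorem bAdj_extendLine (hkn : k ≤ n) {p : Fin n → R} {l : Fin k → R}
    (h : bAdj k f (p ∘ Fin.castLE hkn) l) : bAdj n f p (extendLine f p l) := by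
  intro i hi
  by_cases hik : (i : ℕ) < k
  · have hprefix : (fun j : Fin i => extendLine f p l (Fin.castLE i.isLt.le j)) =
        fun j => l (Fin.castLE hik.le j) :=
      funext fun j => extendLine_of_lt f p l (j.isLt.trans hik)
    rw [hprefix, extendLine_of_lt f p l hik]
    exact h ⟨i, hik⟩ hi
  · rw [extendLine, dif_neg hik]
    ring

theorem bijOn_comp_castLE (hk : 0 < k) (hkn : k ≤ n) (p : Fin n → R) :
    Set.BijOn (· ∘ Fin.castLE hkn) {l | bAdj n f p l} {l | bAdj k f (p ∘ Fin.castLE hkn) l} := by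
  refine ⟨fun l hl => hl.comp_castLE f hkn, fun l₁ hl₁ l₂ hl₂ h => ?_, fun l hl => ?_⟩
  · exact hl₁.eq_of_apply_zero f hl₂ (hk.trans_le hkn) (congrFun h ⟨0, hk⟩)
  · exact ⟨extendLine f p l, bAdj_extendLine f hkn hl, extendLine_comp_castLE f hkn p l⟩

theorem BGamma_neighborSet_inl (p : Fin n → R) :
    (BGamma R n f).neighborSet (.inl p) = .inr '' {l | bAdj n f p l} := by
  ext (q | l) <;> simp [BGamma]

theorem BGamma_neighborSet_inr (l : Fin n → R) :
    (BGamma R n f).neighborSet (.inr l) = .inl '' {p | bAdj n f p l} := by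
  ext (p | q) <;> simp [BGamma]

theorem truncate_surjective (hkn : k ≤ n) : Function.Surjective (truncate R hkn) :=
  Sum.map_surjective.mpr ⟨(Fin.castLE_injective hkn).surjective_comp_right,
    (Fin.castLE_injective hkn).surjective_comp_right⟩

theorem isLocallyBijective_truncate (hk : 0 < k) (hkn : k ≤ n) :
    (BGamma R n f).IsLocallyBijective (BGamma R k f) (truncate R hkn) := by
  rintro (p | l)
  · rw [BGamma_neighborSet_inl, truncate, Sum.map_inl, BGamma_neighborSet_inl,
      ← Set.bijOn_comp_iff Sum.inr_injective.injOn]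
    exact Sum.inr_injective.injOn.bijOn_image.comp (bijOn_comp_castLE f hk hkn p)
  · simp only [BGamma_neighborSet_inr, truncate, Sum.map_inr, ← bAdj_swap f]
    rw [← Set.bijOn_comp_iff Sum.inl_injective.injOn]
    exact Sum.inl_injective.injOn.bijOn_image.comp (bijOn_comp_castLE _ hk hkn l)

theorem mem_firstIn_iff_truncate_mem (A : Set R) (hk : 0 < k) (hkn : k ≤ n) (v) :
    v ∈ firstIn R A n (hk.trans_le hkn) ↔ truncate R hkn v ∈ firstIn R A k hk := by
  rcases v with p | l <;> rfl

end BGamma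

/-- For `2 ≤ k < n`, the characteristic polynomial of the real adjacency matrix of `BΓ_k[A]`
divides that of `BΓ_n[A]`: the spectrum of `BΓ_k[A]` embeds in that of `BΓ_n[A]`. -/
theorem statement_4 (R : Type) [CommRing R] [Fintype R] (n k : ℕ)
    (hk : 2 ≤ k) (hkn : k < n)
    (f : (i : ℕ) → (Fin i → R) → (Fin i → R) → R) (A : Set R) :
    Matrix.charpoly
        (SimpleGraph.adjMatrix ℝ ((BGamma R k f).induce (firstIn R A k (by omega)))) ∣
      Matrix.charpoly
        (SimpleGraph.adjMatrix ℝ ((BGamma R n f).induce (firstIn R A n (by omega)))) := by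
  have hk₀ : 0 < k := by omega
  have hmem := mem_firstIn_iff_truncate_mem A hk₀ hkn.le
  refine ((isLocallyBijective_truncate f hk₀ hkn.le).induce hmem).charpoly_adjMatrix_dvd ?_
  rintro ⟨v, hv⟩
  obtain ⟨w, rfl⟩ := truncate_surjective hkn.le v
  exact ⟨⟨w, (hmem w).mpr hv⟩, rfl⟩
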